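/- For every nonzero integer q and every root u₀ ∈ ℂ of the Riley polynomial φ_q, one has γ_q(u₀) ≠ 0, where γ_q(u) = (τ_q(u) − 2)/u². Consequently the twisted Alexander polynomial Δ_{K,ρ}(t) = γ_q + δ_q t + γ_q t² associated with the corresponding parabolic representation has degree exactly 2. -/

import Mathlib

open Polynomial

/-- `λ₊(u) = ((u²+2) + r)/2` where `r` is a square root of `u⁴+4u²`. -/
noncomputable def lamp (u r : ℂ) : ℂ := (u ^ 2 + 2 + r) / 2

/-- `λ₋(u) = ((u²+2) - r)/2` where `r` is a square root of `u⁴+4u²`. -/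
noncomputable def lamm (u r : ℂ) : ℂ := (u ^ 2 + 2 - r) / 2

/-- `P` is the Riley polynomial `φ_q`, characterized by
`(λ₊ - λ₋)·φ_q(u) = (1-u)(λ₊^q - λ₋^q) - (λ₊^{q-1} - λ₋^{q-1})`. -/
def RileyRel (q : ℤ) (P : Polynomial ℤ) : Prop :=
  ∀ u r : ℂ, r ^ 2 = u ^ 4 + 4 * u ^ 2 →
    (lamp u r - lamm u r) * (Polynomial.aeval u P : ℂ) =
      (1 - u) * ((lamp u r) ^ q - (lamm u r) ^ q) -
        ((lamp u r) ^ (q - 1) - (lamm u r) ^ (q - 1))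

/-- `P` is the polynomial `γ_q`, characterized by
`(λ₊ - 1)(λ₋ - 1)·γ_q(u) = (λ₊^q - 1)(λ₋^q - 1)`. -/
def GammaRel (q : ℤ) (P : Polynomial ℤ) : Prop :=
  ∀ u r : ℂ, r ^ 2 = u ^ 4 + 4 * u ^ 2 →
    (lamp u r - 1) * (lamm u r - 1) * (Polynomial.aeval u P : ℂ) =
      ((lamp u r) ^ q - 1) * ((lamm u r) ^ q - 1)

/-!
Write `λ₊, λ₋` for the roots of `λ² - (u² + 2)λ + 1`, so `λ₊λ₋ = 1` and `λ₊ - λ₋ = r` with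
`r² = u⁴ + 4u²`. If `r ≠ 0` and `γ_q(u₀) = 0`, then one of `λ₊^q, λ₋^q` is `1`, hence both
are; the Riley relation at the root `u₀` then collapses to `λ₊⁻¹ = λ₋⁻¹`, i.e. `r = 0`.
If `r = 0`, then `u₀ ∈ {0, ±2i}` has degree at most `2` over `ℚ`, so irreducibility forces
`deg φ_q ≤ 2`, hence `|q| ≤ 1`, and the monic `γ_q` of degree `2|q| - 2` is the constant `1`.
-/

theorem Polynomial.natDegree_le_of_irreducible_of_aeval_eq_zero {K L : Type*} [Field K]
    [Ring L] [Nontrivial L] [Algebra K L] {p m : K[X]} (hp : Irreducible p) {x : L}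
    (hpx : aeval x p = 0) (hm : m ≠ 0) (hmx : aeval x m = 0) :
    p.natDegree ≤ m.natDegree := by
  have hlc : p.leadingCoeff⁻¹ ≠ 0 := inv_ne_zero (leadingCoeff_ne_zero.mpr hp.ne_zero)
  apply natDegree_le_natDegree
  calc p.degree = (p * C p.leadingCoeff⁻¹).degree := (degree_mul_C hlc).symm
    _ = (minpoly K x).degree := by rw [minpoly.eq_of_irreducible hp hpx]
    _ ≤ m.degree := minpoly.degree_le_of_ne_zero K x hm hmx

theorem natDegree_le_two_of_aeval_eq_zero {P : ℤ[X]}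
    (hirr : Irreducible (P.map (Int.castRingHom ℚ)))
    {u : ℂ} (hroot : aeval u P = 0) (hu : u ^ 4 + 4 * u ^ 2 = 0) : P.natDegree ≤ 2 := by
  have hrootℚ : aeval u (P.map (Int.castRingHom ℚ)) = 0 := by
    rw [← algebraMap_int_eq, aeval_map_algebraMap, hroot]
  rw [← natDegree_map_eq_of_injective (RingHom.injective_int (Int.castRingHom ℚ)) P]
  obtain hu0 | hu4 : u = 0 ∨ u ^ 2 + 4 = 0 := by
    simpa using (show u ^ 2 * (u ^ 2 + 4) = 0 by linear_combination hu)
  · calc _ ≤ (X : ℚ[X]).natDegree :=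
          natDegree_le_of_irreducible_of_aeval_eq_zero hirr hrootℚ X_ne_zero (by simp [hu0])
      _ ≤ 2 := by simp
  · calc _ ≤ (X ^ 2 + C (4 : ℚ)).natDegree :=
          natDegree_le_of_irreducible_of_aeval_eq_zero hirr hrootℚ
            (X_pow_add_C_ne_zero two_pos 4) (by simpa using hu4)
      _ = 2 := natDegree_X_pow_add_C

theorem zpow_eq_one_of_mul_eq_one {K : Type*} [DivisionRing K] {a b : K} (q : ℤ) (hab : a * b = 1)
    (h : (a ^ q - 1) * (b ^ q - 1) = 0) : a ^ q = 1 ∧ b ^ q = 1 := by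
  have habq : a ^ q * b ^ q = 1 := by
    rw [← inv_eq_of_mul_eq_one_right hab, inv_zpow', zpow_neg, mul_inv_cancel₀]
    exact zpow_ne_zero _ (left_ne_zero_of_mul_eq_one hab)
  rcases mul_eq_zero.mp h with ha | hb
  · have ha := sub_eq_zero.mp ha
    exact ⟨ha, by rwa [ha, one_mul] at habq⟩
  · have hb := sub_eq_zero.mp hb
    exact ⟨by rwa [hb, mul_one] at habq, hb⟩

section Lambda

variable {u r : ℂ}

theorem lamp_sub_lamm : lamp u r - lamm u r = r := by
  unfold lamp lamm; ring

theorem lamp_mul_lamm (hr : r ^ 2 = u ^ 4 + 4 * u ^ 2) : lamp u r * lamm u r = 1 := by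
  unfold lamp lamm; linear_combination -hr / 4

theorem aeval_ne_zero_of_gammaRel_of_rileyRel {q : ℤ} {G P : ℤ[X]} (hG : GammaRel q G)
    (hP : RileyRel q P) (hroot : aeval u P = 0) (hr : r ^ 2 = u ^ 4 + 4 * u ^ 2) (hr0 : r ≠ 0) :
    aeval u G ≠ 0 := by
  intro hG0
  have hab := lamp_mul_lamm hr
  have hγ := hG u r hr
  rw [hG0, mul_zero, eq_comm] at hγ
  obtain ⟨ha, hb⟩ := zpow_eq_one_of_mul_eq_one q hab hγ
  have hφ := hP u r hr
  rw [hroot, mul_zero, zpow_sub_one₀ (left_ne_zero_of_mul_eq_one hab),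
    zpow_sub_one₀ (right_ne_zero_of_mul_eq_one hab), ha, hb] at hφ
  have hinv : (lamp u r)⁻¹ = (lamm u r)⁻¹ := by linear_combination hφ
  exact hr0 (by rw [← lamp_sub_lamm (u := u) (r := r), inv_injective hinv, sub_self])

end Lambda

theorem stmt_11_general (q : ℤ) (G P : Polynomial ℤ)
    (hG : GammaRel q G) (hGmonic : G.Monic) (hGdeg : G.natDegree = 2 * q.natAbs - 2)
    (hP : RileyRel q P)
    (hirr : Irreducible (P.map (Int.castRingHom ℚ)))
    (hPdeg₁ : 0 < q → P.natDegree = 2 * q.natAbs - 1)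
    (hPdeg₂ : q < 0 → P.natDegree = 2 * q.natAbs)
    (u₀ : ℂ) (hroot : Polynomial.aeval u₀ P = 0) :
    (Polynomial.aeval u₀ G : ℂ) ≠ 0 ∧
    ∀ δ : ℂ,
      (C (Polynomial.aeval u₀ G : ℂ) + C δ * X +
        C (Polynomial.aeval u₀ G : ℂ) * X ^ 2).natDegree = 2 := by
  have hγ : aeval u₀ G ≠ 0 := by
    obtain ⟨r, hr⟩ := IsAlgClosed.exists_pow_nat_eq (u₀ ^ 4 + 4 * u₀ ^ 2) two_pos
    by_cases hr0 : r = 0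
    · have hPle := natDegree_le_two_of_aeval_eq_zero hirr hroot (by rw [← hr, hr0]; ring)
      have hG1 : G = 1 := by
        rw [← hGmonic.natDegree_eq_zero, hGdeg]
        rcases lt_trichotomy q 0 with hq | rfl | hq
        · have := hPdeg₂ hq; omega
        · rfl
        · have := hPdeg₁ hq; omega
      simp [hG1]
    · exact aeval_ne_zero_of_gammaRel_of_rileyRel hG hP hroot hr hr0
  refine ⟨hγ, fun δ => ?_⟩
  convert natDegree_quadratic (b := δ) (c := aeval u₀ G) hγ using 2
  ring

/-- γ_q does not vanish at any root of φ_q; hence the twisted Alexander polynomial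
γ_q + δ t + γ_q t² has degree exactly 2. -/
theorem stmt_11 (q : ℤ) (hq : q ≠ 0) (G P : Polynomial ℤ)
    (hG : GammaRel q G) (hGmonic : G.Monic) (hGdeg : G.natDegree = 2 * q.natAbs - 2)
    (hP : RileyRel q P)
    (hirr : Irreducible (P.map (Int.castRingHom ℚ)))
    (hPdeg₁ : 0 < q → P.natDegree = 2 * q.natAbs - 1)
    (hPdeg₂ : q < 0 → P.natDegree = 2 * q.natAbs)
    (u₀ : ℂ) (hroot : Polynomial.aeval u₀ P = 0) :
    (Polynomial.aeval u₀ G : ℂ) ≠ 0 ∧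
    ∀ δ : ℂ,
      (C (Polynomial.aeval u₀ G : ℂ) + C δ * X +
        C (Polynomial.aeval u₀ G : ℂ) * X ^ 2).natDegree = 2 :=
  stmt_11_general q G P hG hGmonic hGdeg hP hirr hPdeg₁ hPdeg₂ u₀ hroot
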